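/- arXiv:2508.05887 — 4 statements merged into one kernel-verified Lean document; each statement's English description precedes it below -/
import Mathlib

section
/- Let n ≥ 2 and let P be an n×n real matrix with nonnegative entries, positive diagonal entries, column stochastic (each column sums to 1), and primitive (there exists k such that every entry of P^k is strictly positive). Given an initial vector y⁰ ∈ ℝⁿ, define y^t = P^t y⁰ and x^t = P^t 𝟙 (where 𝟙 is the all-ones vector). Then for every index i, x^t_i > 0 for all t, and the ratio y^t_i / x^t_i converges, as t → ∞, to (∑_{j=1}^n y⁰_j)/n, i.e., every node's ratio converges to the average of the initial values. -/
open Matrix Filter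

lemma rc_pow_nonneg {n : ℕ} {P : Matrix (Fin n) (Fin n) ℝ}
    (h : ∀ i j, 0 ≤ P i j) (k : ℕ) : ∀ i j, 0 ≤ (P ^ k) i j := by
  induction k with
  | zero =>
    intro i j
    rw [pow_zero, Matrix.one_apply]
    split <;> norm_num
  | succ k ih =>
    intro i j
    rw [pow_succ, Matrix.mul_apply]
    exact Finset.sum_nonneg fun l _ => mul_nonneg (ih i l) (h l j)

lemma rc_pow_colsum {n : ℕ} {P : Matrix (Fin n) (Fin n) ℝ}
    (h : ∀ j, ∑ i, P i j = 1) (k : ℕ) : ∀ j, ∑ i, (P ^ k) i j = 1 := by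
  induction k with
  | zero =>
    intro j
    simp [Matrix.one_apply]
  | succ k ih =>
    intro j
    simp only [pow_succ, Matrix.mul_apply]
    rw [Finset.sum_comm]
    have : ∀ l, ∑ i, (P ^ k) i l * P l j = P l j := by
      intro l
      rw [← Finset.sum_mul, ih l, one_mul]
    simp only [this]
    exact h j

/-- Ratio consensus (Proposition 1): for a primitive, column-stochastic, nonnegative
matrix `P` with positive diagonal, the componentwise ratio of the iterations
`y^t = P^t y⁰` and `x^t = P^t 𝟙` converges at every node to the average of the
initial values. -/
theorem ratio_consensus {n : ℕ} (hn : 2 ≤ n) (P : Matrix (Fin n) (Fin n) ℝ)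
    (hnonneg : ∀ i j, 0 ≤ P i j)
    (hdiag : ∀ i, 0 < P i i)
    (hcol : ∀ j, ∑ i, P i j = 1)
    (hprim : ∃ k : ℕ, ∀ i j, 0 < (P ^ k) i j)
    (y0 : Fin n → ℝ) :
    ∀ i : Fin n,
      (∀ t : ℕ, 0 < ((P ^ t) *ᵥ (1 : Fin n → ℝ)) i) ∧
      Tendsto (fun t : ℕ => ((P ^ t) *ᵥ y0) i / ((P ^ t) *ᵥ (1 : Fin n → ℝ)) i)
        atTop (nhds ((∑ j, y0 j) / n)) := by
  obtain ⟨k, hk⟩ := hprim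
  have hn0 : 0 < n := by omega
  have hnR : (0 : ℝ) < (n : ℝ) := by exact_mod_cast hn0
  -- the iterates
  set x : ℕ → Fin n → ℝ := fun t => (P ^ t) *ᵥ (1 : Fin n → ℝ) with hxdef
  set yv : ℕ → Fin n → ℝ := fun t => (P ^ t) *ᵥ y0 with hydef
  have hxadd : ∀ s t, x (s + t) = (P ^ s) *ᵥ x t := by
    intro s t
    rw [hxdef]
    simp only
    rw [pow_add, ← Matrix.mulVec_mulVec]
  have hyadd : ∀ s t, yv (s + t) = (P ^ s) *ᵥ yv t := by
    intro s t
    rw [hydef]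
    simp only
    rw [pow_add, ← Matrix.mulVec_mulVec]
  -- sums are preserved
  have hsum : ∀ (t : ℕ) (v : Fin n → ℝ), ∑ i, ((P ^ t) *ᵥ v) i = ∑ j, v j := by
    intro t v
    simp only [Matrix.mulVec, dotProduct]
    rw [Finset.sum_comm]
    have : ∀ j, ∑ i, (P ^ t) i j * v j = v j := by
      intro j
      rw [← Finset.sum_mul, rc_pow_colsum hcol t j, one_mul]
    simp only [this]
  have hxsum : ∀ t, ∑ i, x t i = n := by
    intro t
    rw [hxdef]
    simp only
    rw [hsum t]
    simp
  have hysum : ∀ t, ∑ i, yv t i = ∑ j, y0 j := by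
    intro t
    rw [hydef]
    simp only
    rw [hsum t]
  -- positivity
  have hxpos : ∀ t i, 0 < x t i := by
    intro t
    induction t with
    | zero =>
      intro i
      simp [hxdef]
    | succ t ih =>
      intro i
      have h1 : x (t + 1) = x (1 + t) := by rw [add_comm]
      rw [h1, hxadd 1 t, pow_one]
      simp only [Matrix.mulVec, dotProduct]
      exact Finset.sum_pos' (fun j _ => mul_nonneg (hnonneg i j) (ih j).le)
        ⟨i, Finset.mem_univ i, mul_pos (hdiag i) (ih i)⟩
  have hxle : ∀ t i, x t i ≤ n := by
    intro t i
    rw [← hxsum t]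
    exact Finset.single_le_sum (fun j _ => (hxpos t j).le) (Finset.mem_univ i)
  -- δ: minimal entry of P ^ k
  have hne2 : (Finset.univ : Finset (Fin n × Fin n)).Nonempty :=
    ⟨(⟨0, by omega⟩, ⟨0, by omega⟩), Finset.mem_univ _⟩
  set δ : ℝ := Finset.inf' Finset.univ hne2 (fun p => (P ^ k) p.1 p.2) with hδdef
  have hδpos : 0 < δ := by
    rw [hδdef, Finset.lt_inf'_iff]
    exact fun p _ => hk p.1 p.2
  have hδle : ∀ i j, δ ≤ (P ^ k) i j := fun i j =>
    Finset.inf'_le _ (Finset.mem_univ ((i, j) : Fin n × Fin n))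
  have hδsmall : δ ≤ 1 / 2 := by
    have j0 : Fin n := ⟨0, by omega⟩
    have h1 : (n : ℝ) * δ ≤ 1 := by
      calc (n : ℝ) * δ = ∑ _i : Fin n, δ := by simp [mul_comm]
        _ ≤ ∑ i, (P ^ k) i j0 := Finset.sum_le_sum fun i _ => hδle i j0
        _ = 1 := rc_pow_colsum hcol k j0
    have h2 : (2 : ℝ) ≤ (n : ℝ) := by exact_mod_cast hn
    nlinarith
  have hxlow : ∀ t j, δ * n ≤ x (k + t) j := by
    intro t j
    rw [hxadd k t]
    simp only [Matrix.mulVec, dotProduct]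
    calc δ * n = δ * ∑ l, x t l := by rw [hxsum t]
      _ = ∑ l, δ * x t l := Finset.mul_sum _ _ _
      _ ≤ ∑ l, (P ^ k) j l * x t l :=
        Finset.sum_le_sum fun l _ => mul_le_mul_of_nonneg_right (hδle j l) (hxpos t l).le
  -- ratios, max, min
  have hne1 : (Finset.univ : Finset (Fin n)).Nonempty := ⟨⟨0, by omega⟩, Finset.mem_univ _⟩
  set r : ℕ → Fin n → ℝ := fun t i => yv t i / x t i with hrdef
  set Mx : ℕ → ℝ := fun t => Finset.sup' Finset.univ hne1 (r t) with hMdef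
  set mx : ℕ → ℝ := fun t => Finset.inf' Finset.univ hne1 (r t) with hmdef
  have hyle : ∀ t j, yv t j ≤ Mx t * x t j := by
    intro t j
    have h1 : r t j ≤ Mx t := Finset.le_sup' (r t) (Finset.mem_univ j)
    rw [hrdef] at h1
    simp only at h1
    rw [div_le_iff₀ (hxpos t j)] at h1
    exact h1
  have hyge : ∀ t j, mx t * x t j ≤ yv t j := by
    intro t j
    have h1 : mx t ≤ r t j := Finset.inf'_le (r t) (Finset.mem_univ j)
    rw [hrdef] at h1
    simp only at h1
    rw [le_div_iff₀ (hxpos t j)] at h1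
    exact h1
  have hmM : ∀ t, mx t ≤ Mx t := by
    intro t
    have i0 : Fin n := ⟨0, by omega⟩
    exact le_trans (Finset.inf'_le (r t) (Finset.mem_univ i0))
      (Finset.le_sup' (r t) (Finset.mem_univ i0))
  -- one/multi-step monotonicity
  have hup : ∀ s t i, yv (s + t) i ≤ Mx t * x (s + t) i := by
    intro s t i
    rw [hyadd s t, hxadd s t]
    simp only [Matrix.mulVec, dotProduct]
    rw [Finset.mul_sum]
    refine Finset.sum_le_sum fun j _ => ?_
    calc (P ^ s) i j * yv t j ≤ (P ^ s) i j * (Mx t * x t j) :=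
          mul_le_mul_of_nonneg_left (hyle t j) (rc_pow_nonneg hnonneg s i j)
      _ = Mx t * ((P ^ s) i j * x t j) := by ring
  have hlow : ∀ s t i, mx t * x (s + t) i ≤ yv (s + t) i := by
    intro s t i
    rw [hyadd s t, hxadd s t]
    simp only [Matrix.mulVec, dotProduct]
    rw [Finset.mul_sum]
    refine Finset.sum_le_sum fun j _ => ?_
    calc mx t * ((P ^ s) i j * x t j) = (P ^ s) i j * (mx t * x t j) := by ring
      _ ≤ (P ^ s) i j * yv t j :=
          mul_le_mul_of_nonneg_left (hyge t j) (rc_pow_nonneg hnonneg s i j)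
  have hMmono : ∀ s t, Mx (s + t) ≤ Mx t := by
    intro s t
    refine Finset.sup'_le _ _ fun i _ => ?_
    rw [hrdef]
    simp only
    rw [div_le_iff₀ (hxpos (s + t) i)]
    exact hup s t i
  have hmmono : ∀ s t, mx t ≤ mx (s + t) := by
    intro s t
    refine Finset.le_inf' _ _ fun i _ => ?_
    rw [hrdef]
    simp only
    rw [le_div_iff₀ (hxpos (s + t) i)]
    exact hlow s t i
  -- contraction
  have hcontrU : ∀ t i, (∀ j, δ * n ≤ x t j) →
      yv (k + t) i ≤ (Mx t - δ * δ * (Mx t - mx t)) * x (k + t) i := by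
    intro t i hxl
    obtain ⟨j0, _, hj0⟩ := Finset.exists_mem_eq_inf' hne1 (r t)
    have hj0' : yv t j0 = mx t * x t j0 := by
      have hm : mx t = yv t j0 / x t j0 := by rw [hmdef]; simp only; rw [hj0, hrdef]
      rw [hm, div_mul_cancel₀ _ (hxpos t j0).ne']
    have hSsum : yv (k + t) i = Mx t * x (k + t) i
        - ∑ j, (P ^ k) i j * (Mx t * x t j - yv t j) := by
      rw [hyadd k t, hxadd k t]
      simp only [Matrix.mulVec, dotProduct]
      rw [Finset.mul_sum, ← Finset.sum_sub_distrib]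
      exact Finset.sum_congr rfl fun j _ => by ring
    have hterm : δ * δ * (Mx t - mx t) * x (k + t) i
        ≤ (P ^ k) i j0 * (Mx t * x t j0 - yv t j0) := by
      rw [hj0']
      have h1 : δ ≤ (P ^ k) i j0 := hδle i j0
      have h2 : δ * n ≤ x t j0 := hxl j0
      have h3 : 0 ≤ Mx t - mx t := by linarith [hmM t]
      have h4 : x (k + t) i ≤ n := hxle (k + t) i
      have h5 : 0 < x (k + t) i := hxpos (k + t) i
      have h6 : Mx t * x t j0 - mx t * x t j0 = x t j0 * (Mx t - mx t) := by ring
      rw [h6]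
      calc δ * δ * (Mx t - mx t) * x (k + t) i
          ≤ δ * δ * (Mx t - mx t) * n :=
            mul_le_mul_of_nonneg_left h4 (mul_nonneg (mul_nonneg hδpos.le hδpos.le) h3)
        _ = (δ * (δ * n)) * (Mx t - mx t) := by ring
        _ ≤ ((P ^ k) i j0 * x t j0) * (Mx t - mx t) :=
            mul_le_mul_of_nonneg_right
              (mul_le_mul h1 h2 (by positivity) (le_trans hδpos.le h1)) h3
        _ = (P ^ k) i j0 * (x t j0 * (Mx t - mx t)) := by ring
    have hS : δ * δ * (Mx t - mx t) * x (k + t) i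
        ≤ ∑ j, (P ^ k) i j * (Mx t * x t j - yv t j) := by
      refine le_trans hterm ?_
      refine Finset.single_le_sum
        (f := fun j => (P ^ k) i j * (Mx t * x t j - yv t j))
        (fun j _ => ?_) (Finset.mem_univ j0)
      exact mul_nonneg (rc_pow_nonneg hnonneg k i j) (by linarith [hyle t j])
    rw [hSsum]
    nlinarith [hS]
  have hcontrL : ∀ t i, (∀ j, δ * n ≤ x t j) →
      (mx t + δ * δ * (Mx t - mx t)) * x (k + t) i ≤ yv (k + t) i := by
    intro t i hxl
    obtain ⟨j0, _, hj0⟩ := Finset.exists_mem_eq_sup' hne1 (r t)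
    have hj0' : yv t j0 = Mx t * x t j0 := by
      have hm : Mx t = yv t j0 / x t j0 := by rw [hMdef]; simp only; rw [hj0, hrdef]
      rw [hm, div_mul_cancel₀ _ (hxpos t j0).ne']
    have hSsum : yv (k + t) i = mx t * x (k + t) i
        + ∑ j, (P ^ k) i j * (yv t j - mx t * x t j) := by
      rw [hyadd k t, hxadd k t]
      simp only [Matrix.mulVec, dotProduct]
      rw [Finset.mul_sum, ← Finset.sum_add_distrib]
      exact Finset.sum_congr rfl fun j _ => by ring
    have hterm : δ * δ * (Mx t - mx t) * x (k + t) i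
        ≤ (P ^ k) i j0 * (yv t j0 - mx t * x t j0) := by
      rw [hj0']
      have h1 : δ ≤ (P ^ k) i j0 := hδle i j0
      have h2 : δ * n ≤ x t j0 := hxl j0
      have h3 : 0 ≤ Mx t - mx t := by linarith [hmM t]
      have h4 : x (k + t) i ≤ n := hxle (k + t) i
      have h5 : 0 < x (k + t) i := hxpos (k + t) i
      have h6 : Mx t * x t j0 - mx t * x t j0 = x t j0 * (Mx t - mx t) := by ring
      rw [h6]
      calc δ * δ * (Mx t - mx t) * x (k + t) i
          ≤ δ * δ * (Mx t - mx t) * n :=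
            mul_le_mul_of_nonneg_left h4 (mul_nonneg (mul_nonneg hδpos.le hδpos.le) h3)
        _ = (δ * (δ * n)) * (Mx t - mx t) := by ring
        _ ≤ ((P ^ k) i j0 * x t j0) * (Mx t - mx t) :=
            mul_le_mul_of_nonneg_right
              (mul_le_mul h1 h2 (by positivity) (le_trans hδpos.le h1)) h3
        _ = (P ^ k) i j0 * (x t j0 * (Mx t - mx t)) := by ring
    have hS : δ * δ * (Mx t - mx t) * x (k + t) i
        ≤ ∑ j, (P ^ k) i j * (yv t j - mx t * x t j) := by
      refine le_trans hterm ?_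
      refine Finset.single_le_sum
        (f := fun j => (P ^ k) i j * (yv t j - mx t * x t j))
        (fun j _ => ?_) (Finset.mem_univ j0)
      exact mul_nonneg (rc_pow_nonneg hnonneg k i j) (by linarith [hyge t j])
    rw [hSsum]
    nlinarith [hS]
  -- gap
  set D : ℕ → ℝ := fun t => Mx t - mx t with hDdef
  have hDnn : ∀ t, 0 ≤ D t := fun t => by simp only [hDdef]; linarith [hmM t]
  have hDanti : Antitone D := by
    refine antitone_nat_of_succ_le fun t => ?_
    have h1 : (t + 1) = 1 + t := by omega
    simp only [hDdef, h1]
    have := hMmono 1 t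
    have := hmmono 1 t
    linarith
  set c : ℝ := 1 - 2 * (δ * δ) with hcdef
  have hc0 : 0 ≤ c := by rw [hcdef]; nlinarith
  have hc1 : c < 1 := by rw [hcdef]; nlinarith
  have hcontrD : ∀ t, D (k + (k + t)) ≤ c * D (k + t) := by
    intro t
    have hxl : ∀ j, δ * n ≤ x (k + t) j := hxlow t
    have hU : Mx (k + (k + t)) ≤ Mx (k + t) - δ * δ * (Mx (k + t) - mx (k + t)) := by
      refine Finset.sup'_le _ _ fun i _ => ?_
      rw [hrdef]
      simp only
      rw [div_le_iff₀ (hxpos (k + (k + t)) i)]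
      exact hcontrU (k + t) i hxl
    have hL : mx (k + t) + δ * δ * (Mx (k + t) - mx (k + t)) ≤ mx (k + (k + t)) := by
      refine Finset.le_inf' _ _ fun i _ => ?_
      rw [hrdef]
      simp only
      rw [le_div_iff₀ (hxpos (k + (k + t)) i)]
      exact hcontrL (k + t) i hxl
    simp only [hDdef, hcdef]
    linarith
  have hgeo : ∀ u : ℕ, D (k * (u + 1)) ≤ c ^ u * D k := by
    intro u
    induction u with
    | zero => simp
    | succ u ih =>
      have heq : k * (u + 2) = k + (k + k * u) := by ring
      have heq2 : k + k * u = k * (u + 1) := by ring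
      calc D (k * (u + 1 + 1)) = D (k + (k + k * u)) := by rw [show u + 1 + 1 = u + 2 from rfl, heq]
        _ ≤ c * D (k + k * u) := hcontrD (k * u)
        _ = c * D (k * (u + 1)) := by rw [heq2]
        _ ≤ c * (c ^ u * D k) := mul_le_mul_of_nonneg_left ih hc0
        _ = c ^ (u + 1) * D k := by ring
  have hDtend : Tendsto D atTop (nhds 0) := by
    rw [Metric.tendsto_atTop]
    intro ε hε
    have hpow : Tendsto (fun u : ℕ => c ^ u * D k) atTop (nhds 0) := by
      have := tendsto_pow_atTop_nhds_zero_of_lt_one hc0 hc1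
      simpa using this.mul_const (D k)
    rw [Metric.tendsto_atTop] at hpow
    obtain ⟨u, hu⟩ := hpow ε hε
    refine ⟨k * (u + 1), fun t ht => ?_⟩
    have h1 : D t ≤ D (k * (u + 1)) := hDanti ht
    have h2 := hu u le_rfl
    rw [Real.dist_eq, sub_zero] at h2 ⊢
    rw [abs_of_nonneg (hDnn t)]
    calc D t ≤ D (k * (u + 1)) := h1
      _ ≤ c ^ u * D k := hgeo u
      _ ≤ |c ^ u * D k| := le_abs_self _
      _ < ε := h2
  -- the average lies between mx and Mx
  set A : ℝ := (∑ j, y0 j) / n with hAdef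
  have hAub : ∀ t, A ≤ Mx t := by
    intro t
    rw [hAdef, div_le_iff₀ hnR]
    calc (∑ j, y0 j) = ∑ i, yv t i := (hysum t).symm
      _ ≤ ∑ i, Mx t * x t i := Finset.sum_le_sum fun i _ => hyle t i
      _ = Mx t * ∑ i, x t i := by rw [Finset.mul_sum]
      _ = Mx t * n := by rw [hxsum t]
  have hAlb : ∀ t, mx t ≤ A := by
    intro t
    rw [hAdef, le_div_iff₀ hnR]
    calc mx t * n = mx t * ∑ i, x t i := by rw [hxsum t]
      _ = ∑ i, mx t * x t i := by rw [Finset.mul_sum]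
      _ ≤ ∑ i, yv t i := Finset.sum_le_sum fun i _ => hyge t i
      _ = ∑ j, y0 j := hysum t
  -- Mx and mx tend to A
  have hMtend : Tendsto Mx atTop (nhds A) := by
    have h1 : Tendsto (fun t => Mx t - A) atTop (nhds 0) := by
      refine squeeze_zero (fun t => by linarith [hAub t]) (fun t => ?_) hDtend
      simp only [hDdef]
      linarith [hAlb t]
    have := h1.add_const A
    simpa using this
  have hmtend : Tendsto mx atTop (nhds A) := by
    have h1 : Tendsto (fun t => A - mx t) atTop (nhds 0) := by
      refine squeeze_zero (fun t => by linarith [hAlb t]) (fun t => ?_) hDtend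
      simp only [hDdef]
      linarith [hAub t]
    have h2 := (tendsto_const_nhds (x := A) (f := atTop (α := ℕ))).sub h1
    simpa using h2
  -- conclusion
  intro i
  constructor
  · intro t
    exact hxpos t i
  · have := tendsto_of_tendsto_of_tendsto_of_le_of_le hmtend hMtend
      (fun t => Finset.inf'_le (r t) (Finset.mem_univ i))
      (fun t => Finset.le_sup' (r t) (Finset.mem_univ i))
    exact this
end

section
/- Let (w_t)_{t∈ℕ} be a real sequence and let p be a real polynomial of degree M with coefficients β_0, …, β_M such that p(1) = ∑_{j=0}^{M} β_j ≠ 0. Suppose the sequence satisfies the recurrence induced by q(z) = (z − 1)·p(z): for every t ∈ ℕ, ∑_{j=0}^{M} β_j (w_{t+1+j} − w_{t+j}) = 0. If w_t converges to a limit φ as t → ∞, then φ = (∑_{j=0}^{M} β_j w_j) / (∑_{j=0}^{M} β_j); that is, the asymptotic limit of the sequence can be computed exactly from its first M+1 values. -/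
open Filter

/-- Final-value computation (equations (5a)–(5b)): if a convergent real sequence
`w` satisfies the recurrence induced by `q(z) = (z − 1)·p(z)` where
`p(z) = ∑_{j=0}^M β_j z^j` and `p(1) = ∑_j β_j ≠ 0`, then its limit equals
`(∑_{j=0}^M β_j w_j) / (∑_{j=0}^M β_j)`. -/
theorem final_value_from_first_terms (M : ℕ) (β : ℕ → ℝ) (w : ℕ → ℝ) (φ : ℝ)
    (hβ : ∑ j ∈ Finset.range (M + 1), β j ≠ 0)
    (hrec : ∀ t : ℕ, ∑ j ∈ Finset.range (M + 1), β j * (w (t + 1 + j) - w (t + j)) = 0)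
    (hconv : Tendsto w atTop (nhds φ)) :
    φ = (∑ j ∈ Finset.range (M + 1), β j * w j) / (∑ j ∈ Finset.range (M + 1), β j) := by
  set S : ℕ → ℝ := fun t => ∑ j ∈ Finset.range (M + 1), β j * w (t + j) with hS
  have hstep : ∀ t, S (t + 1) = S t := by
    intro t
    have h := hrec t
    have : S (t + 1) - S t = 0 := by
      rw [← h, ← Finset.sum_sub_distrib]
      exact Finset.sum_congr rfl fun j _ => by ring
    linarith
  have hconst : ∀ t, S t = S 0 := by
    intro t
    induction t with
    | zero => rfl
    | succ n ih => rw [hstep, ih]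
  have hlim : Tendsto S atTop (nhds ((∑ j ∈ Finset.range (M + 1), β j) * φ)) := by
    rw [Finset.sum_mul]
    apply tendsto_finset_sum
    intro j _
    exact ((hconv.comp (tendsto_add_atTop_nat j)).const_mul (β j))
  have hlim2 : Tendsto S atTop (nhds (S 0)) := by
    exact tendsto_const_nhds.congr fun t => (hconst t).symm
  have heq : (∑ j ∈ Finset.range (M + 1), β j) * φ = S 0 := tendsto_nhds_unique hlim hlim2
  have hS0 : S 0 = ∑ j ∈ Finset.range (M + 1), β j * w j := by
    simp [hS]
  field_simp
  rw [mul_comm] at heq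
  rw [heq, hS0]
end

section
/- Let n ≥ 2 and let P be an n×n real matrix with nonnegative entries, positive diagonal entries, column stochastic, and primitive. Fix an index i and let p be a real polynomial of degree M with coefficients β_0, …, β_M such that, for q(z) = (z − 1)·p(z), the i-th row of q(P) is zero. Given y⁰ ∈ ℝⁿ, set y^{[j]}_i = (P^j y⁰)_i and x^{[j]}_i = (P^j 𝟙)_i for j = 0, …, M. If ∑_{j=0}^{M} β_j x^{[j]}_i ≠ 0, then (∑_{j=0}^{M} β_j y^{[j]}_i) / (∑_{j=0}^{M} β_j x^{[j]}_i) = (∑_{k=1}^n y⁰_k)/n. That is, node i can compute the exact network average from finitely many local observations of the two iterations. -/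
open Matrix Polynomial

/-- Finite-Time Exact Ratio Consensus (Lemma 1): for a primitive, column-stochastic,
nonnegative matrix `P` with positive diagonal, if `p` has degree `M` and the `i`-th row
of `q(P)` is zero where `q(z) = (z − 1) p(z)`, then node `i` computes the exact average
`(∑_k y⁰_k)/n` as the ratio `(∑_j β_j y_i^{[j]}) / (∑_j β_j x_i^{[j]})` of finitely many
local observations of the iterations `y^t = P^t y⁰`, `x^t = P^t 𝟙`. -/
theorem finite_time_exact_ratio_consensus {n : ℕ} (hn : 2 ≤ n)
    (P : Matrix (Fin n) (Fin n) ℝ)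
    (hnonneg : ∀ i j, 0 ≤ P i j)
    (hdiag : ∀ i, 0 < P i i)
    (hcol : ∀ j, ∑ i, P i j = 1)
    (hprim : ∃ k : ℕ, ∀ i j, 0 < (P ^ k) i j)
    (i : Fin n) (M : ℕ) (p : Polynomial ℝ) (hdeg : p.natDegree = M)
    (hann : ∀ j : Fin n, (Polynomial.aeval P ((Polynomial.X - 1) * p)) i j = 0)
    (y0 : Fin n → ℝ)
    (hden : ∑ j ∈ Finset.range (M + 1), p.coeff j * ((P ^ j) *ᵥ (1 : Fin n → ℝ)) i ≠ 0) :
    (∑ j ∈ Finset.range (M + 1), p.coeff j * ((P ^ j) *ᵥ y0) i) /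
      (∑ j ∈ Finset.range (M + 1), p.coeff j * ((P ^ j) *ᵥ (1 : Fin n → ℝ)) i) =
      (∑ k, y0 k) / n := by
  set A := Polynomial.aeval P p with hA
  set w : Fin n → ℝ := fun j => A i j with hw
  -- entries of A
  have hAentry : ∀ j, A i j = ∑ t ∈ Finset.range (M + 1), p.coeff t * (P ^ t) i j := by
    intro j
    rw [hA, Polynomial.aeval_eq_sum_range, hdeg]
    simp [Matrix.sum_apply]
  -- general sum formula
  have hsum : ∀ v : Fin n → ℝ,
      ∑ t ∈ Finset.range (M + 1), p.coeff t * ((P ^ t) *ᵥ v) i = ∑ k, w k * v k := by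
    intro v
    have : ∀ t, p.coeff t * ((P ^ t) *ᵥ v) i
        = ∑ k, p.coeff t * (P ^ t) i k * v k := by
      intro t
      simp [Matrix.mulVec, dotProduct, Finset.mul_sum, mul_assoc]
    simp only [this]
    rw [Finset.sum_comm]
    refine Finset.sum_congr rfl fun k _ => ?_
    rw [hw]
    simp only [hAentry k, Finset.sum_mul]
  -- w P = w
  have hwP : ∀ j, ∑ k, w k * P k j = w j := by
    intro j
    have h1 : Polynomial.aeval P ((Polynomial.X - 1) * p) = A * P - A := by
      rw [mul_comm, _root_.map_mul, _root_.map_sub, Polynomial.aeval_X, _root_.map_one, mul_sub, mul_one, ← hA]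
    have h2 := hann j
    rw [h1, Matrix.sub_apply, sub_eq_zero, Matrix.mul_apply] at h2
    simpa [hw] using h2
  -- column sums of P^k are 1
  have hcolpow : ∀ k : ℕ, ∀ j, ∑ l, (P ^ k) l j = 1 := by
    intro k
    induction k with
    | zero => intro j; simp [Matrix.one_apply, Finset.sum_ite_eq]
    | succ k ih =>
      intro j
      rw [pow_succ]
      simp only [Matrix.mul_apply]
      rw [Finset.sum_comm]
      calc ∑ m, ∑ l, (P ^ k) l m * P m j
          = ∑ m, (∑ l, (P ^ k) l m) * P m j := by
            simp [Finset.sum_mul]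
        _ = ∑ m, P m j := by simp [ih]
        _ = 1 := hcol j
  -- w P^k = w
  have hwPk : ∀ k : ℕ, ∀ j, ∑ l, w l * (P ^ k) l j = w j := by
    intro k
    induction k with
    | zero => intro j; simp [Matrix.one_apply, Finset.sum_ite_eq]
    | succ k ih =>
      intro j
      rw [pow_succ]
      simp only [Matrix.mul_apply, Finset.mul_sum]
      rw [Finset.sum_comm]
      calc ∑ m, ∑ l, w l * ((P ^ k) l m * P m j)
          = ∑ m, (∑ l, w l * (P ^ k) l m) * P m j := by
            simp [Finset.sum_mul, mul_assoc]
        _ = ∑ m, w m * P m j := by simp [ih]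
        _ = w j := hwP j
  -- w is constant
  obtain ⟨k, hk⟩ := hprim
  have hne : (Finset.univ : Finset (Fin n)).Nonempty := by
    have h0 : 0 < n := by omega
    exact ⟨⟨0, h0⟩, Finset.mem_univ _⟩
  obtain ⟨j0, _, hj0⟩ := Finset.exists_max_image Finset.univ w hne
  have hconst : ∀ m, w m = w j0 := by
    intro m
    by_contra hne'
    have hlt : w m < w j0 := lt_of_le_of_ne (hj0 m (Finset.mem_univ m)) hne'
    have hstrict : ∑ l, w l * (P ^ k) l j0 < ∑ l, w j0 * (P ^ k) l j0 := by
      apply Finset.sum_lt_sum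
      · intro l _
        exact mul_le_mul_of_nonneg_right (hj0 l (Finset.mem_univ l)) (le_of_lt (hk l j0))
      · exact ⟨m, Finset.mem_univ m, mul_lt_mul_of_pos_right hlt (hk m j0)⟩
    rw [hwPk k j0] at hstrict
    rw [← Finset.mul_sum, hcolpow k j0, mul_one] at hstrict
    exact lt_irrefl _ hstrict
  -- compute numerator and denominator
  have hnum : ∑ j ∈ Finset.range (M + 1), p.coeff j * ((P ^ j) *ᵥ y0) i
      = w j0 * ∑ k, y0 k := by
    rw [hsum y0, Finset.mul_sum]
    exact Finset.sum_congr rfl fun k _ => by rw [hconst k]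
  have hden' : ∑ j ∈ Finset.range (M + 1), p.coeff j * ((P ^ j) *ᵥ (1 : Fin n → ℝ)) i
      = w j0 * n := by
    rw [hsum 1]
    simp only [Pi.one_apply, mul_one]
    rw [Finset.sum_congr rfl fun k _ => hconst k]
    simp [mul_comm]
  rw [hnum, hden']
  have hw0 : w j0 ≠ 0 := by
    intro h
    rw [hden', h, zero_mul] at hden
    exact hden rfl
  have hn0 : (n : ℝ) ≠ 0 := by positivity
  field_simp
end

section
/- Let E be a finite-dimensional real inner product space, K ⊆ E a linear subspace with orthogonal projection proj_K, and f : E → ℝ a differentiable function whose gradient is Lipschitz with constant L > 0 and which is strongly convex with constant μ, 0 < μ ≤ L. Let (Ω, ℱ, ℙ) be a probability space, (λ_k)_{k∈ℕ} positive stepsizes, σ ≥ 0, and let x* ∈ E satisfy x* = proj_K(x* − λ_k ∇f(x*)) for every k. Let (X_k)_{k∈ℕ} and (G_k)_{k∈ℕ} be sequences of measurable maps Ω → E such that for all k: X_{k+1}(ω) = proj_K(X_k(ω) − λ_k G_k(ω)) for ℙ-a.e. ω, the functions ω ↦ ‖X_k(ω) − x*‖ and ω ↦ ‖G_k(ω)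 − ∇f(X_k(ω))‖ are integrable, and ∫ ‖G_k − ∇f(X_k)‖ dℙ ≤ σ. Then for every k, ∫ ‖X_{k+1} − x*‖ dℙ ≤ (∏_{t=0}^{k} ζ_t)·∫ ‖X_0 − x*‖ dℙ + σ·∑_{h=0}^{k} λ_h · ∏_{j=h+1}^{k} ζ_j, where ζ_t = max{|1 − λ_t L|, |1 − λ_t μ|} (and an empty product equals 1). -/
/-!
Split `f = h + (μ/2)‖·‖²`. Then `h` is convex and, by the descent lemma for `f`, satisfies the
upper quadratic bound with constant `L - μ`; the two bounds together make `∇h` co-coercive.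
Writing the gradient step as `x - λ∇f x = (1 - λμ) x - λ ∇h x`, co-coercivity shows it is
`max {|1 - λL|, |1 - λμ|}`-Lipschitz. The projection is nonexpansive and fixes `x*`, so almost
surely `‖X_{k+1} - x*‖ ≤ ζ_k ‖X_k - x*‖ + λ_k ‖G_k - ∇f(X_k)‖`; integrating and unrolling this
linear recursion gives the bound.
-/

open MeasureTheory Set Finset RealInnerProductSpace

section InnerProductSpace

variable {E : Type*} [NormedAddCommGroup E] [InnerProductSpace ℝ E]

lemma hasDerivAt_comp_add_smul_of_hasGradientAt [CompleteSpace E] {h : E → ℝ} {g x d : E}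
    {t : ℝ} (hg : HasGradientAt h g (x + t • d)) :
    HasDerivAt (fun s : ℝ => h (x + s • d)) ⟪g, d⟫ t := by
  have hline : HasDerivAt (fun s : ℝ => x + s • d) d t := by
    simpa using ((hasDerivAt_id t).smul_const d).const_add x
  simpa [Function.comp_def] using
    (hasGradientAt_iff_hasFDerivAt.mp hg).comp_hasDerivAt t hline

lemma ConvexOn.add_inner_le_of_hasGradientAt [CompleteSpace E] {h : E → ℝ} {g x : E}
    (hconv : ConvexOn ℝ univ h) (hg : HasGradientAt h g x) (y : E) :
    h x + ⟪g, y - x⟫ ≤ h y := by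
  have hline : ConvexOn ℝ univ (fun t : ℝ => h (x + t • (y - x))) := by
    simpa [Function.comp_def, AffineMap.lineMap_apply_module', add_comm] using
      hconv.comp_affineMap (AffineMap.lineMap x y)
  have hder := hasDerivAt_comp_add_smul_of_hasGradientAt (t := 0) (d := y - x)
    (by simpa using hg)
  have hslope := hline.le_slope_of_hasDerivAt (mem_univ 0) (mem_univ 1) zero_lt_one hder
  simp only [slope_def_field, zero_smul, add_zero, one_smul, add_sub_cancel, sub_zero,
    div_one] at hslope
  linarith

lemma le_add_inner_add_sq_of_lipschitz_gradient [CompleteSpace E] {h : E → ℝ} {g : E → E}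
    {L : ℝ} (hg : ∀ z, HasGradientAt h (g z) z)
    (hlip : ∀ x y, ‖g x - g y‖ ≤ L * ‖x - y‖) (x y : E) :
    h y ≤ h x + ⟪g x, y - x⟫ + L / 2 * ‖y - x‖ ^ 2 := by
  set d := y - x
  set φ : ℝ → ℝ := fun t => h (x + t • d) - t * ⟪g x, d⟫ - L / 2 * t ^ 2 * ‖d‖ ^ 2
  have hφ : ∀ t, HasDerivAt φ (⟪g (x + t • d), d⟫ - ⟪g x, d⟫ - L * t * ‖d‖ ^ 2) t := by
    intro t
    refine (((hasDerivAt_comp_add_smul_of_hasGradientAt (hg (x + t • d))).sub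
      ((hasDerivAt_id t).mul_const ⟪g x, d⟫)).sub
      (((hasDerivAt_pow 2 t).const_mul (L / 2)).mul_const (‖d‖ ^ 2))).congr_deriv
      (by norm_num only [one_mul]; ring)
  have hanti : AntitoneOn φ (Ici 0) := by
    refine antitoneOn_of_hasDerivWithinAt_nonpos (convex_Ici 0)
      (fun t _ => (hφ t).continuousAt.continuousWithinAt)
      (fun t _ => (hφ t).hasDerivWithinAt) fun t ht => ?_
    rw [interior_Ici] at ht
    have hnorm : ‖g (x + t • d) - g x‖ ≤ L * (t * ‖d‖) := by
      simpa [norm_smul, abs_of_pos (mem_Ioi.1 ht)] using hlip (x + t • d) x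
    have hcs := real_inner_le_norm (g (x + t • d) - g x) d
    rw [inner_sub_left] at hcs
    nlinarith [mul_le_mul_of_nonneg_right hnorm (norm_nonneg d)]
  have hφ10 := hanti (mem_Ici.2 le_rfl) (mem_Ici.2 zero_le_one) zero_le_one
  simp only [φ, one_smul, zero_smul, add_zero, d, add_sub_cancel] at hφ10
  linarith

lemma le_mul_of_forall_quadratic_mul_le {A B c : ℝ} (hc : 0 ≤ c)
    (h : ∀ t : ℝ, (2 * t - c * t ^ 2) * A ≤ B) : A ≤ c * B := by
  rcases hc.eq_or_lt with rfl | hc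
  · by_contra! hpos
    simp only [zero_mul, sub_zero] at h hpos
    have ht := h ((B + 1) / (2 * A))
    field_simp at ht
    linarith
  · have ht := h c⁻¹
    field_simp at ht
    nlinarith

lemma norm_sub_sq_le_mul_inner_sub {h : E → ℝ} {g : E → E} {c : ℝ} (hc : 0 ≤ c)
    (hlow : ∀ a b, h a + ⟪g a, b - a⟫ ≤ h b)
    (hup : ∀ a b, h b ≤ h a + ⟪g a, b - a⟫ + c / 2 * ‖b - a‖ ^ 2) (x y : E) :
    ‖g x - g y‖ ^ 2 ≤ c * ⟪g x - g y, x - y⟫ := by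
  have bregman : ∀ (t : ℝ) (a b : E),
      (t - c / 2 * t ^ 2) * ‖g b - g a‖ ^ 2 ≤ h b - h a - ⟪g a, b - a⟫ := by
    intro t a b
    -- test both bounds at the point `b - t • (g b - g a)`
    have h1 := hlow a (b - t • (g b - g a))
    have h2 := hup b (b - t • (g b - g a))
    have e : ‖g b - g a‖ ^ 2 = ⟪g b, g b - g a⟫ - ⟪g a, g b - g a⟫ := by
      rw [← inner_sub_left, real_inner_self_eq_norm_sq]
    rw [show b - t • (g b - g a) - a = (b - a) - t • (g b - g a) by abel,
      inner_sub_right, inner_smul_right] at h1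
    rw [sub_sub_cancel_left, inner_neg_right, inner_smul_right, norm_neg, norm_smul,
      mul_pow, Real.norm_eq_abs, sq_abs] at h2
    linear_combination h1 + h2 + t * e
  refine le_mul_of_forall_quadratic_mul_le hc fun t => ?_
  have hxy := bregman t x y
  have hyx := bregman t y x
  rw [← norm_neg, neg_sub] at hxy
  have hsum : ⟪g y, x - y⟫ + ⟪g x, y - x⟫ = - ⟪g x - g y, x - y⟫ := by
    rw [← neg_sub x y, inner_neg_right, inner_sub_left]; ring
  linarith

lemma HasGradientAt.sub_half_mul_norm_sq [CompleteSpace E] {f : E → ℝ} {g z : E}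
    (hf : HasGradientAt f g z) (μ : ℝ) :
    HasGradientAt (fun x => f x - μ / 2 * ‖x‖ ^ 2) (g - μ • z) z := by
  rw [hasGradientAt_iff_hasFDerivAt] at hf ⊢
  refine (hf.sub (((hasFDerivAt_id z).norm_sq).const_smul (μ / 2))).congr_fderiv ?_
  ext v
  simp only [id_eq, ContinuousLinearMap.comp_id, sub_apply, InnerProductSpace.toDual_apply_apply,
    smul_apply, coe_innerSL_apply, nsmul_eq_mul, Nat.cast_ofNat, smul_eq_mul, map_sub, map_smul]
  ring

lemma norm_smul_sub_smul_le_of_norm_sq_le_mul_inner {g d : E} {a l c : ℝ} (hl : 0 ≤ l)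
    (hc : 0 ≤ c) (hgd : ‖g‖ ^ 2 ≤ c * ⟪g, d⟫) :
    ‖a • d - l • g‖ ≤ max |a - l * c| |a| * ‖d‖ := by
  set M := max |a - l * c| |a|
  have hM₁ : (a - l * c) ^ 2 ≤ M ^ 2 := by rw [← sq_abs]; gcongr; exact le_max_left _ _
  have hM₂ : a ^ 2 ≤ M ^ 2 := by rw [← sq_abs a]; gcongr; exact le_max_right _ _
  have hcs : ⟪g, d⟫ ^ 2 ≤ ‖g‖ ^ 2 * ‖d‖ ^ 2 := by
    rw [← mul_pow]; exact sq_le_sq' (neg_le_of_abs_le (abs_real_inner_le_norm g d))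
      (real_inner_le_norm g d)
  have hs : 0 ≤ ⟪g, d⟫ := by
    by_contra! hneg
    nlinarith [mul_nonpos_of_nonneg_of_nonpos hc hneg.le, sq_nonneg ‖d‖]
  have hsd : ⟪g, d⟫ ≤ c * ‖d‖ ^ 2 := by
    rcases hs.eq_or_lt with hs0 | hspos
    · rw [← hs0]; positivity
    · nlinarith [mul_le_mul_of_nonneg_right hgd (sq_nonneg ‖d‖)]
  have hsq : ‖a • d - l • g‖ ^ 2 ≤ (M * ‖d‖) ^ 2 := by
    rw [norm_sub_sq_real, norm_smul, norm_smul, real_inner_smul_left, real_inner_smul_right,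
      real_inner_comm, Real.norm_eq_abs, Real.norm_eq_abs, mul_pow, mul_pow, mul_pow, sq_abs,
      sq_abs]
    have hq := mul_le_mul_of_nonneg_left hgd (sq_nonneg l)
    rcases le_or_gt (l * c) (2 * a) with hsmall | hlarge
    · nlinarith [mul_nonneg (mul_nonneg hl hs) (sub_nonneg.2 hsmall),
        mul_le_mul_of_nonneg_right hM₂ (sq_nonneg ‖d‖)]
    · nlinarith [mul_le_mul_of_nonneg_left hsd (mul_nonneg hl (sub_nonneg.2 hlarge.le)),
        mul_le_mul_of_nonneg_right hM₁ (sq_nonneg ‖d‖)]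
  exact (sq_le_sq₀ (norm_nonneg _) (by positivity)).1 hsq

lemma norm_sub_smul_gradient_sub_le [CompleteSpace E] {f : E → ℝ} {L μ l : ℝ}
    (hdiff : Differentiable ℝ f) (hμL : μ ≤ L)
    (hlip : ∀ x y : E, ‖gradient f x - gradient f y‖ ≤ L * ‖x - y‖)
    (hsc : ConvexOn ℝ univ fun x => f x - μ / 2 * ‖x‖ ^ 2) (hl : 0 ≤ l) (x y : E) :
    ‖(x - l • gradient f x) - (y - l • gradient f y)‖ ≤
      max |1 - l * L| |1 - l * μ| * ‖x - y‖ := by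
  have hgf : ∀ z, HasGradientAt f (gradient f z) z := fun z => (hdiff z).hasGradientAt
  set g : E → E := fun z => gradient f z - μ • z
  have hg : ∀ z, HasGradientAt (fun x => f x - μ / 2 * ‖x‖ ^ 2) (g z) z :=
    fun z => (hgf z).sub_half_mul_norm_sq μ
  have hup : ∀ a b, f b - μ / 2 * ‖b‖ ^ 2 ≤
      f a - μ / 2 * ‖a‖ ^ 2 + ⟪g a, b - a⟫ + (L - μ) / 2 * ‖b - a‖ ^ 2 := by
    intro a b
    have hf := le_add_inner_add_sq_of_lipschitz_gradient hgf hlip a b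
    have hquad : ‖b - a‖ ^ 2 = ‖b‖ ^ 2 - 2 * ⟪a, b - a⟫ - ‖a‖ ^ 2 := by
      rw [norm_sub_sq_real, inner_sub_right, real_inner_self_eq_norm_sq, real_inner_comm]
      ring
    simp only [g, inner_sub_left, real_inner_smul_left]
    linear_combination hf + μ / 2 * hquad
  have hcoco := norm_sub_sq_le_mul_inner_sub (sub_nonneg.2 hμL)
    (fun a b => hsc.add_inner_le_of_hasGradientAt (hg a) b) hup x y
  have hstep : (x - l • gradient f x) - (y - l • gradient f y) =
      (1 - l * μ) • (x - y) - l • (g x - g y) := by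
    simp only [g]; module
  rw [hstep]
  convert norm_smul_sub_smul_le_of_norm_sq_le_mul_inner hl (sub_nonneg.2 hμL) hcoco using 4
  ring

lemma norm_projected_gradient_step_sub_le [CompleteSpace E] {P : E → E} (hP : LipschitzWith 1 P)
    {f : E → ℝ} {L μ l : ℝ}
    (hdiff : Differentiable ℝ f) (hμL : μ ≤ L)
    (hlip : ∀ x y : E, ‖gradient f x - gradient f y‖ ≤ L * ‖x - y‖)
    (hsc : ConvexOn ℝ univ fun x => f x - μ / 2 * ‖x‖ ^ 2) (hl : 0 ≤ l) {xstar : E}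
    (hfix : xstar = P (xstar - l • gradient f xstar)) (x v : E) :
    ‖P (x - l • v) - xstar‖ ≤
      max |1 - l * L| |1 - l * μ| * ‖x - xstar‖ + l * ‖v - gradient f x‖ := by
  calc ‖P (x - l • v) - xstar‖
      = ‖P (x - l • v) - P (xstar - l • gradient f xstar)‖ := by rw [← hfix]
    _ ≤ ‖(x - l • v) - (xstar - l • gradient f xstar)‖ := by
      simpa using hP.norm_sub_le (x - l • v) (xstar - l • gradient f xstar)
    _ = ‖((x - l • gradient f x) - (xstar - l • gradient f xstar)) -
          l • (v - gradient f x)‖ := by congr 1; module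
    _ ≤ ‖(x - l • gradient f x) - (xstar - l • gradient f xstar)‖ +
          ‖l • (v - gradient f x)‖ := norm_sub_le _ _
    _ ≤ _ := by
      rw [norm_smul, Real.norm_of_nonneg hl]
      gcongr
      exact norm_sub_smul_gradient_sub_le hdiff hμL hlip hsc hl x xstar

end InnerProductSpace

lemma le_prod_mul_add_sum_of_le_mul_add {e ζ b : ℕ → ℝ} (hζ : ∀ k, 0 ≤ ζ k)
    (h : ∀ k, e (k + 1) ≤ ζ k * e k + b k) (k : ℕ) :
    e (k + 1) ≤ (∏ t ∈ range (k + 1), ζ t) * e 0 +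
      ∑ i ∈ range (k + 1), b i * ∏ j ∈ Icc (i + 1) k, ζ j := by
  induction k with
  | zero => simpa using h 0
  | succ k ih =>
    have hsum : ∑ i ∈ range (k + 1), b i * ∏ j ∈ Icc (i + 1) (k + 1), ζ j =
        (∑ i ∈ range (k + 1), b i * ∏ j ∈ Icc (i + 1) k, ζ j) * ζ (k + 1) := by
      rw [sum_mul]
      refine sum_congr rfl fun i hi => ?_
      rw [prod_Icc_succ_top (by simpa using hi), mul_assoc]
    rw [prod_range_succ, sum_range_succ, hsum, Finset.Icc_eq_empty (by omega), Finset.prod_empty]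
    nlinarith [h (k + 1), mul_le_mul_of_nonneg_left ih (hζ (k + 1))]

lemma integral_le_mul_integral_add_mul {Ω : Type*} [MeasurableSpace Ω] {P : Measure Ω}
    {u v w : Ω → ℝ} {ζ l σ : ℝ} (hl : 0 ≤ l) (hu : Integrable u P) (hv : Integrable v P)
    (hw : Integrable w P) (hwσ : ∫ ω, w ω ∂P ≤ σ) (huvw : ∀ᵐ ω ∂P, u ω ≤ ζ * v ω + l * w ω) :
    ∫ ω, u ω ∂P ≤ ζ * ∫ ω, v ω ∂P + l * σ := by
  calc ∫ ω, u ω ∂P ≤ ∫ ω, ζ * v ω + l * w ω ∂P :=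
        integral_mono_ae hu ((hv.const_mul ζ).add (hw.const_mul l)) huvw
    _ = ζ * ∫ ω, v ω ∂P + l * ∫ ω, w ω ∂P := by
        rw [integral_add (hv.const_mul ζ) (hw.const_mul l), integral_const_mul,
          integral_const_mul]
    _ ≤ ζ * ∫ ω, v ω ∂P + l * σ := by gcongr

theorem stochastic_projected_gradient_convergence_general
    {E : Type*} [NormedAddCommGroup E] [InnerProductSpace ℝ E] [FiniteDimensional ℝ E]
    (K : Submodule ℝ E)
    (f : E → ℝ) (hdiff : Differentiable ℝ f)
    (L μ : ℝ) (hμL : μ ≤ L)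
    (hlip : ∀ x y : E, ‖gradient f x - gradient f y‖ ≤ L * ‖x - y‖)
    (hsc : ConvexOn ℝ Set.univ fun x => f x - μ / 2 * ‖x‖ ^ 2)
    {Ω : Type*} [MeasurableSpace Ω] (P : Measure Ω)
    (lam : ℕ → ℝ) (hlam : ∀ k, 0 < lam k) (σ : ℝ)
    (xstar : E)
    (hfix : ∀ k, xstar = (K.orthogonalProjection (xstar - lam k • gradient f xstar) : E))
    (X G : ℕ → Ω → E)
    (hupd : ∀ k, ∀ᵐ ω ∂P,
      X (k + 1) ω = (K.orthogonalProjection (X k ω - lam k • G k ω) : E))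
    (hintX : ∀ k, Integrable (fun ω => ‖X k ω - xstar‖) P)
    (hintG : ∀ k, Integrable (fun ω => ‖G k ω - gradient f (X k ω)‖) P)
    (hGerr : ∀ k, ∫ ω, ‖G k ω - gradient f (X k ω)‖ ∂P ≤ σ) :
    ∀ k : ℕ, ∫ ω, ‖X (k + 1) ω - xstar‖ ∂P ≤
      (∏ t ∈ Finset.range (k + 1), max |1 - lam t * L| |1 - lam t * μ|) *
        ∫ ω, ‖X 0 ω - xstar‖ ∂P +
      σ * ∑ h ∈ Finset.range (k + 1),
        lam h * ∏ j ∈ Finset.Icc (h + 1) k, max |1 - lam j * L| |1 - lam j * μ| := by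
  have hstep : ∀ k, ∫ ω, ‖X (k + 1) ω - xstar‖ ∂P ≤
      max |1 - lam k * L| |1 - lam k * μ| * ∫ ω, ‖X k ω - xstar‖ ∂P + lam k * σ := by
    intro k
    refine integral_le_mul_integral_add_mul (hlam k).le (hintX (k + 1)) (hintX k) (hintG k)
      (hGerr k) ?_
    filter_upwards [hupd k] with ω hω
    rw [hω]
    exact norm_projected_gradient_step_sub_le K.lipschitzWith_starProjection hdiff hμL hlip hsc
      (hlam k).le (hfix k) (X k ω) (G k ω)
  intro k
  convert le_prod_mul_add_sum_of_le_mul_add (e := fun k => ∫ ω, ‖X k ω - xstar‖ ∂P)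
    (ζ := fun t => max |1 - lam t * L| |1 - lam t * μ|) (b := fun k => lam k * σ)
    (fun t => (abs_nonneg _).trans (le_max_left _ _)) hstep k using 2
  rw [mul_sum]
  exact sum_congr rfl fun i _ => by ring

/-- Main convergence result (Theorem 1): for the inexact projected stochastic gradient
method `X_{k+1} = proj_K(X_k - λ_k G_k)` a.s., where the stochastic gradient `G_k`
satisfies `∫ ‖G_k - ∇f(X_k)‖ dℙ ≤ σ`, `f` is `L`-smooth and `μ`-strongly convex
(`0 < μ ≤ L`), and `x*` is a fixed point of every projected gradient step, the expected
distance to `x*` satisfies the product-sum bound with per-step contraction factors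
`ζ_t = max {|1 - λ_t L|, |1 - λ_t μ|}`. -/
theorem stochastic_projected_gradient_convergence
    {E : Type*} [NormedAddCommGroup E] [InnerProductSpace ℝ E] [FiniteDimensional ℝ E]
    [MeasurableSpace E] [BorelSpace E]
    (K : Submodule ℝ E)
    (f : E → ℝ) (hdiff : Differentiable ℝ f)
    (L μ : ℝ) (hL : 0 < L) (hμ : 0 < μ) (hμL : μ ≤ L)
    (hlip : ∀ x y : E, ‖gradient f x - gradient f y‖ ≤ L * ‖x - y‖)
    (hsc : ConvexOn ℝ Set.univ fun x => f x - μ / 2 * ‖x‖ ^ 2)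
    {Ω : Type*} [MeasurableSpace Ω] (P : Measure Ω) [IsProbabilityMeasure P]
    (lam : ℕ → ℝ) (hlam : ∀ k, 0 < lam k) (σ : ℝ) (hσ : 0 ≤ σ)
    (xstar : E)
    (hfix : ∀ k, xstar = (K.orthogonalProjection (xstar - lam k • gradient f xstar) : E))
    (X G : ℕ → Ω → E)
    (hXmeas : ∀ k, Measurable (X k)) (hGmeas : ∀ k, Measurable (G k))
    (hupd : ∀ k, ∀ᵐ ω ∂P,
      X (k + 1) ω = (K.orthogonalProjection (X k ω - lam k • G k ω) : E))
    (hintX : ∀ k, Integrable (fun ω => ‖X k ω - xstar‖) P)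
    (hintG : ∀ k, Integrable (fun ω => ‖G k ω - gradient f (X k ω)‖) P)
    (hGerr : ∀ k, ∫ ω, ‖G k ω - gradient f (X k ω)‖ ∂P ≤ σ) :
    ∀ k : ℕ, ∫ ω, ‖X (k + 1) ω - xstar‖ ∂P ≤
      (∏ t ∈ Finset.range (k + 1), max |1 - lam t * L| |1 - lam t * μ|) *
        ∫ ω, ‖X 0 ω - xstar‖ ∂P +
      σ * ∑ h ∈ Finset.range (k + 1),
        lam h * ∏ j ∈ Finset.Icc (h + 1) k, max |1 - lam j * L| |1 - lam j * μ| :=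
  stochastic_projected_gradient_convergence_general K f hdiff L μ hμL hlip hsc P lam hlam σ xstar
    hfix X G hupd hintX hintG hGerr
end
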